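/- arXiv:2311.11680 — 3 statements merged into one kernel-verified Lean document; each statement's English description precedes it below -/
import Mathlib

section
/- Let Ω ⊆ ℝ^N be an open set with bounded boundary and finite Lebesgue measure |Ω|, and let 1 ≤ p < 2. If a measurable function u : Ω → ℝ satisfies ∫_Ω |u(x)|² dx + ∫_Ω∫_Ω k(x,y)·|u(y)−u(x)|^p / |x−y|^{N+s(x,y)p} dx dy ≤ C₀ for some constant C₀ > 0, then u ∈ L²(Ω) ∩ W^{s(·,·),p}(Ω) and ∫_Ω |u(x)|² dx + ∫_Ω∫_Ω |u(y)−u(x)|^p / |x−y|^{N+s(x,y)p} dx dy ≤ C₀/C₁ + C₀ + 4(C₀+1)(|Ω|²+1)/min{1, δ₁^{N+2}}. -/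
open MeasureTheory ENNReal Set Filter Topology

noncomputable section

/-- Euclidean space `ℝ^N`. -/
abbrev Euc (N : ℕ) := EuclideanSpace ℝ (Fin N)

/-- The standing assumptions on the variable order `s`: symmetric, continuous,
with `0 < sm ≤ s(x,y) ≤ sp < 1`. -/
def SCond (N : ℕ) (s : Euc N → Euc N → ℝ) (sm sp : ℝ) : Prop :=
  Continuous (fun z : Euc N × Euc N => s z.1 z.2) ∧
  (∀ x y, s x y = s y x) ∧ 0 < sm ∧ sp < 1 ∧ ∀ x y, sm ≤ s x y ∧ s x y ≤ sp

/-- `p`-th power of the variable-order Gagliardo seminorm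
`∫_Ω ∫_Ω |u(x)−u(y)|^p / |x−y|^{N+s(x,y)p} dx dy`. -/
def gagP (N : ℕ) (s : Euc N → Euc N → ℝ) (p : ℝ) (Ω : Set (Euc N)) (u : Euc N → ℝ) : ℝ≥0∞ :=
  ∫⁻ x in Ω, ∫⁻ y in Ω, ENNReal.ofReal (|u x - u y| ^ p / ‖x - y‖ ^ ((N : ℝ) + s x y * p))

/-- Membership in the variable-order fractional Sobolev space `W^{s(·,·),p}(Ω)`. -/
def MemW (N : ℕ) (s : Euc N → Euc N → ℝ) (p : ℝ) (Ω : Set (Euc N)) (u : Euc N → ℝ) : Prop :=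
  MemLp u (ENNReal.ofReal p) (volume.restrict Ω) ∧ gagP N s p Ω u < ⊤

/-- The norm `‖u‖_{L^p(Ω)} + [u]_{W^{s(·,·),p}(Ω)}` (as an `ℝ≥0∞`-valued quantity). -/
def WnormE (N : ℕ) (s : Euc N → Euc N → ℝ) (p : ℝ) (Ω : Set (Euc N)) (u : Euc N → ℝ) : ℝ≥0∞ :=
  eLpNorm u (ENNReal.ofReal p) (volume.restrict Ω) + gagP N s p Ω u ^ (1 / p)

/-- The standing assumptions on the kernel `k`: symmetric and
`C₁·χ_{|x−y|<δ₁} ≤ k ≤ C₂·χ_{|x−y|<δ₂}` on `Ω × Ω` (so in particular `k ∈ L^∞`). -/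
def KCond (N : ℕ) (Ω : Set (Euc N)) (k : Euc N → Euc N → ℝ) (δ₁ δ₂ C₁ C₂ : ℝ) : Prop :=
  (∀ x y, k x y = k y x) ∧ 0 < δ₁ ∧ δ₁ < δ₂ ∧ 0 < C₁ ∧ 0 < C₂ ∧
  ∀ x ∈ Ω, ∀ y ∈ Ω,
    (if ‖x - y‖ < δ₁ then C₁ else 0) ≤ k x y ∧ k x y ≤ (if ‖x - y‖ < δ₂ then C₂ else 0)

private lemma tp_le {t p : ℝ} (ht : 0 ≤ t) (hp1 : 1 ≤ p) (hp2 : p ≤ 2) :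
    t ^ p ≤ t ^ 2 + 1 := by
  rcases le_or_gt t 1 with h1 | h1
  · have := Real.rpow_le_one ht h1 (by linarith)
    nlinarith [sq_nonneg t]
  · have h : t ^ p ≤ t ^ (2 : ℝ) := Real.rpow_le_rpow_of_exponent_le h1.le hp2
    rw [show (2:ℝ) = ((2:ℕ):ℝ) by norm_num, Real.rpow_natCast] at h
    linarith

/-- Lemma 2.2 (boundedness): if the `L²` norm together with the `k`-weighted
variable-order Gagliardo energy of `u` is bounded by `C₀`, then
`u ∈ L²(Ω) ∩ W^{s(·,·),p}(Ω)` with an explicit bound. -/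
theorem stmt0 (N : ℕ) (s : Euc N → Euc N → ℝ) (sm sp : ℝ) (hs : SCond N s sm sp)
    (Ω : Set (Euc N)) (hΩo : IsOpen Ω) (hΩb : Bornology.IsBounded (frontier Ω))
    (hΩf : volume Ω < ⊤)
    (k : Euc N → Euc N → ℝ) (δ₁ δ₂ C₁ C₂ : ℝ) (hk : KCond N Ω k δ₁ δ₂ C₁ C₂)
    (p : ℝ) (hp1 : 1 ≤ p) (hp2 : p < 2)
    (u : Euc N → ℝ) (hu : Measurable u) (C₀ : ℝ) (hC₀ : 0 < C₀)
    (hbound :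
      (∫⁻ x in Ω, ENNReal.ofReal ((u x) ^ 2)) +
        (∫⁻ x in Ω, ∫⁻ y in Ω,
          ENNReal.ofReal (k x y * |u y - u x| ^ p / ‖x - y‖ ^ ((N : ℝ) + s x y * p)))
      ≤ ENNReal.ofReal C₀) :
    MemLp u 2 (volume.restrict Ω) ∧ MemW N s p Ω u ∧
      (∫⁻ x in Ω, ENNReal.ofReal ((u x) ^ 2)) + gagP N s p Ω u
        ≤ ENNReal.ofReal
            (C₀ / C₁ + C₀ +
              4 * (C₀ + 1) * (((volume Ω).toReal) ^ 2 + 1) / min 1 (δ₁ ^ (N + 2))) := by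
  obtain ⟨hscont, hssymm, hsm, hsp, hsb⟩ := hs
  obtain ⟨hksymm, hδ₁, hδ12, hC₁, hC₂, hkb⟩ := hk
  have hΩm : MeasurableSet Ω := hΩo.measurableSet
  set V : ℝ := (volume Ω).toReal with hVdef
  have hV0 : (0:ℝ) ≤ V := ENNReal.toReal_nonneg
  have hμV : volume Ω = ENNReal.ofReal V := (ENNReal.ofReal_toReal hΩf.ne).symm
  set m : ℝ := min 1 (δ₁ ^ (N + 2)) with hmdef
  have hm : 0 < m := lt_min one_pos (pow_pos hδ₁ _)
  set A2 : ℝ≥0∞ := ∫⁻ x in Ω, ENNReal.ofReal ((u x) ^ 2) with hA2def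
  set B : ℝ≥0∞ := ∫⁻ x in Ω, ∫⁻ y in Ω,
      ENNReal.ofReal (k x y * |u y - u x| ^ p / ‖x - y‖ ^ ((N : ℝ) + s x y * p)) with hBdef
  have hA2 : A2 ≤ ENNReal.ofReal C₀ := le_trans le_self_add hbound
  have hB : B ≤ ENNReal.ofReal C₀ := le_trans le_add_self hbound
  -- u ∈ L²(Ω)
  have hL2 : MemLp u 2 (volume.restrict Ω) := by
    refine ⟨hu.aestronglyMeasurable, ?_⟩
    rw [eLpNorm_eq_lintegral_rpow_enorm_toReal two_ne_zero ENNReal.ofNat_ne_top]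
    have heq : (∫⁻ x in Ω, ‖u x‖ₑ ^ (2 : ℝ≥0∞).toReal) = A2 := by
      rw [hA2def]
      refine lintegral_congr fun x => ?_
      rw [ENNReal.toReal_ofNat, show ((2:ℝ)) = ((2:ℕ):ℝ) by norm_num,
        ENNReal.rpow_natCast, Real.enorm_eq_ofReal_abs,
        ← ENNReal.ofReal_pow (abs_nonneg _), sq_abs]
    rw [heq]
    exact ENNReal.rpow_lt_top_of_nonneg (by norm_num)
      (lt_of_le_of_lt hA2 ENNReal.ofReal_lt_top).ne
  -- the pointwise estimate
  have hpt : ∀ x ∈ Ω, ∀ y ∈ Ω,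
      ENNReal.ofReal (|u x - u y| ^ p / ‖x - y‖ ^ ((N : ℝ) + s x y * p)) ≤
      ENNReal.ofReal ((1/C₁) * (k x y * |u y - u x| ^ p / ‖x - y‖ ^ ((N : ℝ) + s x y * p))) +
      ENNReal.ofReal ((1/m) * (2*(u x)^2 + 2*(u y)^2 + 1)) := by
    intro x hx y hy
    rcases lt_or_ge ‖x - y‖ δ₁ with hnear | hfar
    · refine le_trans (ENNReal.ofReal_le_ofReal ?_) le_self_add
      rw [abs_sub_comm (u x)]
      have hk1 : C₁ ≤ k x y := by
        have := (hkb x hx y hy).1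
        simpa [hnear] using this
      have ht : 0 ≤ |u y - u x| ^ p / ‖x - y‖ ^ ((N : ℝ) + s x y * p) :=
        div_nonneg (Real.rpow_nonneg (abs_nonneg _) _) (Real.rpow_nonneg (norm_nonneg _) _)
      calc |u y - u x| ^ p / ‖x - y‖ ^ ((N : ℝ) + s x y * p)
          ≤ (k x y / C₁) * (|u y - u x| ^ p / ‖x - y‖ ^ ((N : ℝ) + s x y * p)) :=
            le_mul_of_one_le_left ht ((one_le_div hC₁).2 hk1)
        _ = (1/C₁) * (k x y * |u y - u x| ^ p / ‖x - y‖ ^ ((N : ℝ) + s x y * p)) := by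
            ring
    · refine le_trans (ENNReal.ofReal_le_ofReal ?_) le_add_self
      have hs1 := (hsb x y).1
      have hs2 := (hsb x y).2
      have hp0 : (0:ℝ) < p := lt_of_lt_of_le one_pos hp1
      have hxy0 : (0:ℝ) < ‖x - y‖ := lt_of_lt_of_le hδ₁ hfar
      have hsxy : 0 < s x y := lt_of_lt_of_le hsm hs1
      have he0 : (0:ℝ) ≤ (N : ℝ) + s x y * p := by positivity
      have he2 : (N : ℝ) + s x y * p ≤ (N : ℝ) + 2 := by nlinarith
      have hd : m ≤ ‖x - y‖ ^ ((N : ℝ) + s x y * p) := by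
        rcases le_or_gt 1 ‖x - y‖ with h1 | h1
        · refine le_trans (min_le_left _ _) ?_
          calc (1:ℝ) = 1 ^ ((N : ℝ) + s x y * p) := (Real.one_rpow _).symm
            _ ≤ ‖x - y‖ ^ ((N : ℝ) + s x y * p) := Real.rpow_le_rpow zero_le_one h1 he0
        · calc m ≤ δ₁ ^ (N + 2) := min_le_right _ _
            _ ≤ ‖x - y‖ ^ (N + 2) := pow_le_pow_left₀ hδ₁.le hfar _
            _ = ‖x - y‖ ^ (((N + 2 : ℕ) : ℝ)) := (Real.rpow_natCast _ _).symm
            _ = ‖x - y‖ ^ ((N : ℝ) + 2) := by norm_num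
            _ ≤ ‖x - y‖ ^ ((N : ℝ) + s x y * p) :=
              Real.rpow_le_rpow_of_exponent_ge hxy0 h1.le he2
      have habs : |u x - u y| ^ p ≤ 2*(u x)^2 + 2*(u y)^2 + 1 := by
        have h1 : |u x - u y| ^ p ≤ |u x - u y| ^ 2 + 1 := tp_le (abs_nonneg _) hp1 hp2.le
        have h2 : |u x - u y| ^ 2 = (u x - u y) ^ 2 := sq_abs _
        nlinarith [sq_nonneg (u x + u y)]
      calc |u x - u y| ^ p / ‖x - y‖ ^ ((N : ℝ) + s x y * p)
          ≤ (2*(u x)^2 + 2*(u y)^2 + 1) / m :=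
            div_le_div₀ (by positivity) habs hm hd
        _ = (1/m) * (2*(u x)^2 + 2*(u y)^2 + 1) := by ring
  -- inner integral computations
  have hHmeas : ∀ x, Measurable fun y : Euc N =>
      ENNReal.ofReal ((1/m) * (2*(u x)^2 + 2*(u y)^2 + 1)) := by
    intro x
    exact ENNReal.measurable_ofReal.comp
      (measurable_const.mul ((((hu.pow_const 2).const_mul 2).const_add _).add_const 1))
  have hIH : ∀ x, (∫⁻ y in Ω, ENNReal.ofReal ((1/m) * (2*(u x)^2 + 2*(u y)^2 + 1))) =
      ENNReal.ofReal (1/m) *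
        (ENNReal.ofReal (2*(u x)^2 + 1) * volume Ω + 2 * A2) := by
    intro x
    have hrw : ∀ y, ENNReal.ofReal ((1/m) * (2*(u x)^2 + 2*(u y)^2 + 1)) =
        ENNReal.ofReal (1/m) *
          (ENNReal.ofReal (2*(u x)^2 + 1) + 2 * ENNReal.ofReal ((u y)^2)) := by
      intro y
      rw [show (1/m) * (2*(u x)^2 + 2*(u y)^2 + 1)
          = (1/m) * ((2*(u x)^2 + 1) + 2 * (u y)^2) by ring,
        ENNReal.ofReal_mul (by positivity),
        ENNReal.ofReal_add (by positivity) (by positivity),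
        ENNReal.ofReal_mul (by norm_num : (0:ℝ) ≤ 2), ENNReal.ofReal_ofNat]
    simp_rw [hrw]
    rw [lintegral_const_mul' _ _ ENNReal.ofReal_ne_top,
      lintegral_add_left measurable_const, setLIntegral_const,
      lintegral_const_mul' _ _ (by norm_num : (2:ℝ≥0∞) ≠ ⊤), ← hA2def]
  have hIG : ∀ x, (∫⁻ y in Ω,
      ENNReal.ofReal ((1/C₁) * (k x y * |u y - u x| ^ p / ‖x - y‖ ^ ((N : ℝ) + s x y * p)))) =
      ENNReal.ofReal (1/C₁) *
        ∫⁻ y in Ω,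
          ENNReal.ofReal (k x y * |u y - u x| ^ p / ‖x - y‖ ^ ((N : ℝ) + s x y * p)) := by
    intro x
    simp_rw [ENNReal.ofReal_mul (by positivity : (0:ℝ) ≤ 1/C₁)]
    exact lintegral_const_mul' _ _ ENNReal.ofReal_ne_top
  -- main bound on gagP
  have hgag : gagP N s p Ω u ≤
      ENNReal.ofReal (C₀ / C₁) +
      ENNReal.ofReal (4 * (C₀ + 1) * (V ^ 2 + 1) / m) := by
    have step1 : gagP N s p Ω u ≤
        ∫⁻ x in Ω,
          (ENNReal.ofReal (1/C₁) *
            (∫⁻ y in Ω, ENNReal.ofReal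
              (k x y * |u y - u x| ^ p / ‖x - y‖ ^ ((N : ℝ) + s x y * p))) +
           ENNReal.ofReal (1/m) *
            (ENNReal.ofReal (2*(u x)^2 + 1) * volume Ω + 2 * A2)) := by
      unfold gagP
      refine lintegral_mono_ae ?_
      filter_upwards [ae_restrict_mem hΩm] with x hx
      calc (∫⁻ y in Ω, ENNReal.ofReal (|u x - u y| ^ p / ‖x - y‖ ^ ((N : ℝ) + s x y * p)))
          ≤ ∫⁻ y in Ω,
            (ENNReal.ofReal ((1/C₁) *
              (k x y * |u y - u x| ^ p / ‖x - y‖ ^ ((N : ℝ) + s x y * p))) +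
             ENNReal.ofReal ((1/m) * (2*(u x)^2 + 2*(u y)^2 + 1))) := by
            refine lintegral_mono_ae ?_
            filter_upwards [ae_restrict_mem hΩm] with y hy
            exact hpt x hx y hy
        _ = _ := by
            rw [lintegral_add_right _ (hHmeas x), hIG x, hIH x]
    have hg2meas : Measurable fun x : Euc N =>
        ENNReal.ofReal (1/m) * (ENNReal.ofReal (2*(u x)^2 + 1) * volume Ω + 2 * A2) := by
      refine measurable_const.mul (Measurable.add_const ?_ _)
      exact (ENNReal.measurable_ofReal.comp
        (((hu.pow_const 2).const_mul 2).add_const 1)).mul_const _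
    have step2 : (∫⁻ x in Ω,
          (ENNReal.ofReal (1/C₁) *
            (∫⁻ y in Ω, ENNReal.ofReal
              (k x y * |u y - u x| ^ p / ‖x - y‖ ^ ((N : ℝ) + s x y * p))) +
           ENNReal.ofReal (1/m) *
            (ENNReal.ofReal (2*(u x)^2 + 1) * volume Ω + 2 * A2))) =
        ENNReal.ofReal (1/C₁) * B +
        ENNReal.ofReal (1/m) * ((2 * A2 + volume Ω) * volume Ω + 2 * A2 * volume Ω) := by
      rw [lintegral_add_right _ hg2meas]
      congr 1
      · rw [lintegral_const_mul' _ _ ENNReal.ofReal_ne_top, hBdef]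
      · rw [lintegral_const_mul' _ _ ENNReal.ofReal_ne_top]
        congr 1
        rw [lintegral_add_right _ measurable_const, setLIntegral_const]
        congr 1
        · rw [lintegral_mul_const' _ _ hΩf.ne]
          congr 1
          have hrw2 : ∀ x : Euc N, ENNReal.ofReal (2*(u x)^2 + 1) =
              2 * ENNReal.ofReal ((u x)^2) + 1 := by
            intro x
            rw [ENNReal.ofReal_add (by positivity) zero_le_one,
              ENNReal.ofReal_mul (by norm_num : (0:ℝ) ≤ 2),
              ENNReal.ofReal_ofNat, ENNReal.ofReal_one]
          simp_rw [hrw2]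
          rw [lintegral_add_right _ measurable_const, setLIntegral_const, one_mul,
            lintegral_const_mul' _ _ (by norm_num : (2:ℝ≥0∞) ≠ ⊤), ← hA2def]
    have e1 : (2:ℝ≥0∞) * ENNReal.ofReal C₀ = ENNReal.ofReal (2*C₀) := by
      rw [ENNReal.ofReal_mul (by norm_num : (0:ℝ) ≤ 2), ENNReal.ofReal_ofNat]
    calc gagP N s p Ω u
        ≤ ENNReal.ofReal (1/C₁) * B +
          ENNReal.ofReal (1/m) *
            ((2 * A2 + volume Ω) * volume Ω + 2 * A2 * volume Ω) := step1.trans step2.le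
      _ ≤ ENNReal.ofReal (1/C₁) * ENNReal.ofReal C₀ +
          ENNReal.ofReal (1/m) *
            ((2 * ENNReal.ofReal C₀ + ENNReal.ofReal V) * ENNReal.ofReal V +
              2 * ENNReal.ofReal C₀ * ENNReal.ofReal V) := by
          rw [hμV]
          gcongr
      _ = ENNReal.ofReal (C₀/C₁) +
          ENNReal.ofReal ((1/m) * ((2*C₀ + V) * V + 2*C₀*V)) := by
          congr 1
          · rw [← ENNReal.ofReal_mul (by positivity), one_div_mul_eq_div]
          · rw [e1, ← ENNReal.ofReal_add (by positivity) hV0,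
              ← ENNReal.ofReal_mul (by positivity),
              ← ENNReal.ofReal_mul (by positivity),
              ← ENNReal.ofReal_add (by positivity) (by positivity),
              ← ENNReal.ofReal_mul (by positivity)]
      _ ≤ ENNReal.ofReal (C₀ / C₁) + ENNReal.ofReal (4 * (C₀ + 1) * (V ^ 2 + 1) / m) := by
          gcongr
          rw [div_eq_mul_one_div (4 * (C₀ + 1) * (V ^ 2 + 1)) m, mul_comm _ (1/m)]
          refine mul_le_mul_of_nonneg_left ?_ (by positivity)
          nlinarith [sq_nonneg (V - 1), mul_nonneg hC₀.le (sq_nonneg (V - 1))]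
  -- assemble
  haveI : IsFiniteMeasure (volume.restrict Ω : Measure (Euc N)) :=
    ⟨by rwa [Measure.restrict_apply_univ]⟩
  have hple : ENNReal.ofReal p ≤ (2 : ℝ≥0∞) := by
    calc ENNReal.ofReal p ≤ ENNReal.ofReal 2 := ENNReal.ofReal_le_ofReal hp2.le
      _ = 2 := by norm_num
  refine ⟨hL2, ⟨hL2.mono_exponent hple, ?_⟩, ?_⟩
  · exact lt_of_le_of_lt hgag (by
      exact lt_of_le_of_lt le_rfl (ENNReal.add_lt_top.2
        ⟨ENNReal.ofReal_lt_top, ENNReal.ofReal_lt_top⟩))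
  · calc A2 + gagP N s p Ω u
        ≤ ENNReal.ofReal C₀ +
          (ENNReal.ofReal (C₀ / C₁) + ENNReal.ofReal (4 * (C₀ + 1) * (V ^ 2 + 1) / m)) :=
          add_le_add hA2 hgag
      _ ≤ ENNReal.ofReal (C₀ / C₁ + C₀ + 4 * (C₀ + 1) * (V ^ 2 + 1) / m) := by
          rw [← ENNReal.ofReal_add (by positivity) (by positivity),
            ← ENNReal.ofReal_add (by positivity) (by positivity)]
          exact ENNReal.ofReal_le_ofReal (le_of_eq (by ring))
end
end

section
/- Let Ω ⊆ ℝ^N be a bounded open set, 1 ≤ p < ∞, and let s₁ be a constant with s⁻ ≤ s₁ ≤ s(x,y) for a.e. (x,y) ∈ Ω×Ω. Then for every u ∈ W^{s(·,·),p}(Ω) one has [u]_{W^{s₁,p}(Ω)} ≤ C·[u]_{W^{s(·,·),p}(Ω)}, where C = sup_{(x,y)∈Ω×Ω} |x−y|^{s(x,y)−s₁}; in particular W^{s(·,·),p}(Ω) is continuously embedded in the constant-order fractional Sobolev space W^{s₁,p}(Ω), i.e. there is a constant C' = C'(N,s,s₁,Ω) with ‖u‖_{W^{s₁,p}(Ω)}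 ≤ C'·‖u‖_{W^{s(·,·),p}(Ω)} for all u ∈ W^{s(·,·),p}(Ω). -/
open MeasureTheory ENNReal Set Filter Topology

noncomputable section

set_option maxHeartbeats 1000000 in
/-- Lemma 3.2: continuous embedding of `W^{s(·,·),p}(Ω)` into the constant-order
space `W^{s₁,p}(Ω)` on a bounded open set, when `s⁻ ≤ s₁ ≤ s(x,y)` a.e. -/
theorem stmt1 (N : ℕ) (s : Euc N → Euc N → ℝ) (sm sp : ℝ) (hs : SCond N s sm sp)
    (Ω : Set (Euc N)) (hΩo : IsOpen Ω) (hΩb : Bornology.IsBounded Ω)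
    (p : ℝ) (hp : 1 ≤ p)
    (s₁ : ℝ) (hs₁l : sm ≤ s₁)
    (hs₁u : ∀ᵐ z ∂((volume.restrict Ω).prod (volume.restrict Ω)), s₁ ≤ s z.1 z.2) :
    (∀ u : Euc N → ℝ, MemW N s p Ω u →
      gagP N (fun _ _ => s₁) p Ω u ^ (1 / p)
        ≤ ENNReal.ofReal
            (sSup ((fun z : Euc N × Euc N => ‖z.1 - z.2‖ ^ (s z.1 z.2 - s₁)) '' (Ω ×ˢ Ω)))
          * gagP N s p Ω u ^ (1 / p)) ∧
    ∃ C' : ℝ, 0 < C' ∧ ∀ u : Euc N → ℝ, MemW N s p Ω u →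
      MemW N (fun _ _ => s₁) p Ω u ∧
      WnormE N (fun _ _ => s₁) p Ω u ≤ ENNReal.ofReal C' * WnormE N s p Ω u := by
  obtain ⟨hcont, hsymm, hsm, hsp, hbd⟩ := hs
  have hp0 : (0:ℝ) < p := lt_of_lt_of_le one_pos hp
  have h1p : (0:ℝ) < 1 / p := by positivity
  rcases Set.eq_empty_or_nonempty Ω with rfl | hΩne
  · constructor
    · intro u _
      simp [gagP, ENNReal.zero_rpow_of_pos h1p, hp0]
    · refine ⟨1, one_pos, fun u hu => ⟨⟨hu.1, by simp [gagP]⟩, ?_⟩⟩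
      have h0 : WnormE N (fun _ _ => s₁) p ∅ u = 0 := by
        simp [WnormE, gagP, ENNReal.zero_rpow_of_pos h1p, hp0]
      rw [h0]
      exact zero_le
  -- main case
  set S := (fun z : Euc N × Euc N => ‖z.1 - z.2‖ ^ (s z.1 z.2 - s₁)) '' (Ω ×ˢ Ω) with hSdef
  -- pointwise lower bound on s from the a.e. bound, via continuity
  have hpt : ∀ x ∈ Ω, ∀ y ∈ Ω, s₁ ≤ s x y := by
    by_contra h
    push_neg at h
    obtain ⟨x₀, hx₀, y₀, hy₀, hlt⟩ := h
    have hW : IsOpen {z : Euc N × Euc N | s z.1 z.2 < s₁} :=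
      isOpen_lt hcont continuous_const
    have hopen : IsOpen ({z : Euc N × Euc N | s z.1 z.2 < s₁} ∩ (Ω ×ˢ Ω)) :=
      hW.inter (hΩo.prod hΩo)
    have hmem : (x₀, y₀) ∈ {z : Euc N × Euc N | s z.1 z.2 < s₁} ∩ (Ω ×ˢ Ω) :=
      ⟨hlt, hx₀, hy₀⟩
    obtain ⟨A, B, hA, hB, hxA, hyB, hAB⟩ := isOpen_prod_iff.mp hopen x₀ y₀ hmem
    have hA' : A ⊆ Ω := fun x hx => ((hAB (mk_mem_prod hx hyB)).2).1
    have hB' : B ⊆ Ω := fun y hy => ((hAB (mk_mem_prod hxA hy)).2).2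
    have h0 : ((volume.restrict Ω).prod (volume.restrict Ω))
        {z : Euc N × Euc N | ¬ s₁ ≤ s z.1 z.2} = 0 := ae_iff.mp hs₁u
    have hle : ((volume.restrict Ω).prod (volume.restrict Ω)) (A ×ˢ B) = 0 := by
      refine le_antisymm ?_ (zero_le)
      rw [← h0]
      exact measure_mono (fun z hz => not_le.mpr (hAB hz).1)
    rw [Measure.prod_prod, Measure.restrict_apply hA.measurableSet,
      Measure.restrict_apply hB.measurableSet,
      inter_eq_self_of_subset_left hA', inter_eq_self_of_subset_left hB'] at hle
    have hpos1 := hA.measure_pos (volume : Measure (Euc N)) ⟨x₀, hxA⟩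
    have hpos2 := hB.measure_pos (volume : Measure (Euc N)) ⟨y₀, hyB⟩
    exact absurd hle (ENNReal.mul_pos hpos1.ne' hpos2.ne').ne'
  obtain ⟨D, hD⟩ := Metric.isBounded_iff.mp hΩb
  have hSbdd : BddAbove S := by
    refine ⟨max 1 D, ?_⟩
    rintro _ ⟨⟨x, y⟩, ⟨hx, hy⟩, rfl⟩
    have ht0 : 0 ≤ s x y - s₁ := sub_nonneg.mpr (hpt x hx y hy)
    have ht1 : s x y - s₁ ≤ 1 := by
      have h1 := (hbd x y).2
      linarith
    rcases le_or_gt ‖x - y‖ 1 with h1 | h1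
    · exact le_trans (Real.rpow_le_one (norm_nonneg _) h1 ht0) (le_max_left _ _)
    · calc ‖x - y‖ ^ (s x y - s₁) ≤ ‖x - y‖ ^ (1:ℝ) :=
            Real.rpow_le_rpow_of_exponent_le h1.le ht1
        _ = ‖x - y‖ := Real.rpow_one _
        _ ≤ D := by rw [← dist_eq_norm]; exact hD hx hy
        _ ≤ max 1 D := le_max_right _ _
  set C := sSup S with hCdef
  have hCmem : ∀ x ∈ Ω, ∀ y ∈ Ω, ‖x - y‖ ^ (s x y - s₁) ≤ C :=
    fun x hx y hy => le_csSup hSbdd ⟨(x, y), ⟨hx, hy⟩, rfl⟩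
  have hC0 : 0 ≤ C := by
    obtain ⟨x, hx⟩ := hΩne
    exact le_trans (Real.rpow_nonneg (norm_nonneg _) _) (hCmem x hx x hx)
  -- key integral inequality
  have hkey : ∀ u : Euc N → ℝ,
      gagP N (fun _ _ => s₁) p Ω u ≤ ENNReal.ofReal (C ^ p) * gagP N s p Ω u := by
    intro u
    have hpw : ∀ x ∈ Ω, ∀ y ∈ Ω,
        |u x - u y| ^ p / ‖x - y‖ ^ ((N:ℝ) + s₁ * p)
          ≤ C ^ p * (|u x - u y| ^ p / ‖x - y‖ ^ ((N:ℝ) + s x y * p)) := by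
      intro x hx y hy
      rcases eq_or_ne x y with rfl | hxy
      · have h00 : |u x - u x| ^ p = 0 := by
          simp [Real.zero_rpow hp0.ne']
        rw [h00, zero_div]
        positivity
      · have hr : (0:ℝ) < ‖x - y‖ := norm_pos_iff.mpr (sub_ne_zero.mpr hxy)
        have hrt : (0:ℝ) < ‖x - y‖ ^ (s x y - s₁) := Real.rpow_pos_of_pos hr _
        have e1 : (‖x - y‖ ^ (s x y - s₁)) ^ p * ‖x - y‖ ^ ((N:ℝ) + s₁ * p)
            = ‖x - y‖ ^ ((N:ℝ) + s x y * p) := by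
          rw [← Real.rpow_mul hr.le, ← Real.rpow_add hr]
          ring_nf
        have h2 : ‖x - y‖ ^ ((N:ℝ) + s₁ * p) ≠ 0 := (Real.rpow_pos_of_pos hr _).ne'
        have h3 : (‖x - y‖ ^ (s x y - s₁)) ^ p ≠ 0 := (Real.rpow_pos_of_pos hrt _).ne'
        calc |u x - u y| ^ p / ‖x - y‖ ^ ((N:ℝ) + s₁ * p)
            = (‖x - y‖ ^ (s x y - s₁)) ^ p
                * (|u x - u y| ^ p / ‖x - y‖ ^ ((N:ℝ) + s x y * p)) := by
              rw [← e1]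
              field_simp
          _ ≤ C ^ p * (|u x - u y| ^ p / ‖x - y‖ ^ ((N:ℝ) + s x y * p)) := by
              refine mul_le_mul_of_nonneg_right
                (Real.rpow_le_rpow hrt.le (hCmem x hx y hy) hp0.le) ?_
              positivity
    unfold gagP
    rw [← lintegral_const_mul' _ _ ENNReal.ofReal_ne_top]
    refine lintegral_mono_ae ((ae_restrict_iff' hΩo.measurableSet).mpr
      (ae_of_all _ fun x hx => ?_))
    rw [← lintegral_const_mul' _ _ ENNReal.ofReal_ne_top]
    refine lintegral_mono_ae ((ae_restrict_iff' hΩo.measurableSet).mpr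
      (ae_of_all _ fun y hy => ?_))
    rw [← ENNReal.ofReal_mul (by positivity)]
    exact ENNReal.ofReal_le_ofReal (hpw x hx y hy)
  have part1 : ∀ u : Euc N → ℝ,
      gagP N (fun _ _ => s₁) p Ω u ^ (1 / p)
        ≤ ENNReal.ofReal C * gagP N s p Ω u ^ (1 / p) := by
    intro u
    have h := ENNReal.rpow_le_rpow (hkey u) h1p.le
    rwa [ENNReal.mul_rpow_of_nonneg _ _ h1p.le,
      ENNReal.ofReal_rpow_of_nonneg (by positivity) h1p.le,
      ← Real.rpow_mul hC0, mul_one_div_cancel hp0.ne', Real.rpow_one] at h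
  refine ⟨fun u _ => part1 u, ⟨C + 1, by linarith, fun u hu => ?_⟩⟩
  have hfin : gagP N (fun _ _ => s₁) p Ω u < ⊤ :=
    lt_of_le_of_lt (hkey u) (ENNReal.mul_lt_top ENNReal.ofReal_lt_top hu.2)
  refine ⟨⟨hu.1, hfin⟩, ?_⟩
  unfold WnormE
  rw [mul_add]
  refine add_le_add ?_ ?_
  · exact le_mul_of_one_le_left (zero_le) (ENNReal.one_le_ofReal.mpr (by linarith))
  · exact le_trans (part1 u) (mul_le_mul_left (ENNReal.ofReal_le_ofReal (by linarith)) _)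
end
end

section
/- Let Ω ⊆ ℝ^N be an open set of class C^{0,1} with bounded boundary and 1 ≤ p < ∞. Then there exists a constant C = C(N,s,p,Ω) such that for every u ∈ W^{s(·,·),p}(Ω), ∫_Ω |u(x) − u_Ω| dx ≤ C·[u]_{W^{s(·,·),p}(Ω)}, where u_Ω = (1/|Ω|)·∫_Ω u dx is the mean value of u over Ω. -/
open MeasureTheory ENNReal Set Filter Topology

noncomputable section

/-- The last coordinate of a point of `ℝ^N`. -/
def lastC {N : ℕ} (hN : 0 < N) (y : Euc N) : ℝ := y ⟨N - 1, Nat.sub_lt hN one_pos⟩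

/-- The first `N-1` coordinates of a point of `ℝ^N`. -/
def initC {N : ℕ} (y : Euc N) : EuclideanSpace ℝ (Fin (N - 1)) :=
  WithLp.toLp 2 (fun i : Fin (N - 1) => y ⟨i.1, lt_of_lt_of_le i.2 (Nat.sub_le N 1)⟩)

/-- `Ω ⊆ ℝ^N` is the hypograph `{(x',x_N) : x_N < γ(x')}` of a Lipschitz function
`γ : ℝ^{N-1} → ℝ`. -/
def IsLipschitzHypograph {N : ℕ} (Ω : Set (Euc N)) : Prop :=
  ∃ (hN : 0 < N) (γ : EuclideanSpace ℝ (Fin (N - 1)) → ℝ) (L : NNReal),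
    LipschitzWith L γ ∧ Ω = {y : Euc N | lastC hN y < γ (initC y)}

/-- `Ω ⊆ ℝ^N` is an open set of class `C^{0,1}` with bounded boundary: `∂Ω` is bounded and
near each boundary point, after a rotation plus a translation, `Ω` coincides with a
Lipschitz hypograph. -/
def IsC01 {N : ℕ} (Ω : Set (Euc N)) : Prop :=
  IsOpen Ω ∧ Bornology.IsBounded (frontier Ω) ∧
  ∀ x ∈ frontier Ω, ∃ U : Set (Euc N), IsOpen U ∧ x ∈ U ∧
    ∃ (R : Euc N ≃ₗᵢ[ℝ] Euc N) (b : Euc N) (Ω' : Set (Euc N)),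
      IsLipschitzHypograph Ω' ∧ Ω ∩ U = ((fun y => R y + b) ⁻¹' Ω') ∩ U

/-- A preconnected set avoiding the frontier of an open set and meeting it is contained in it. -/
lemma aux_preconn_subset {α : Type*} [TopologicalSpace α] {T U : Set α}
    (hT : IsPreconnected T) (hU : IsOpen U) (hd : ∀ z ∈ T, z ∉ frontier U)
    (hne : (T ∩ U).Nonempty) : T ⊆ U := by
  intro z hz
  by_contra hzU
  have mem_int : ∀ w ∈ T, w ∈ closure U → w ∈ U := by
    intro w hw hwc
    rcases (closure_eq_interior_union_frontier U ▸ hwc) with h | h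
    · rwa [hU.interior_eq] at h
    · exact absurd h (hd w hw)
  have hzc : z ∈ (closure U)ᶜ := fun hcl => hzU (mem_int z hz hcl)
  have hcover : T ⊆ U ∪ (closure U)ᶜ := by
    intro w hw
    by_cases hwc : w ∈ closure U
    · exact Or.inl (mem_int w hw hwc)
    · exact Or.inr hwc
  obtain ⟨w, hwT, hw⟩ := hT U (closure U)ᶜ hU isClosed_closure.isOpen_compl hcover hne ⟨z, hz, hzc⟩
  exact hw.2 (subset_closure hw.1)

/-- An open set with bounded frontier and finite volume is bounded. -/
lemma aux_bounded {N : ℕ} {Ω : Set (Euc N)} (hopen : IsOpen Ω)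
    (hfrb : Bornology.IsBounded (frontier Ω)) (hΩf : volume Ω < ⊤) :
    Bornology.IsBounded Ω := by
  obtain ⟨r0, hr0⟩ := hfrb.subset_closedBall 0
  set r := max r0 0 with hrdef
  have hfr : frontier Ω ⊆ Metric.closedBall 0 r :=
    hr0.trans (Metric.closedBall_subset_closedBall (le_max_left _ _))
  have hr0' : (0:ℝ) ≤ r := le_max_right _ _
  have key : Ω ⊆ Metric.closedBall 0 r := by
    intro x hx
    rw [Metric.mem_closedBall, dist_zero_right]
    by_contra hnx
    push_neg at hnx
    have hxpos : 0 < ‖x‖ := lt_of_le_of_lt hr0' hnx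
    set c : ℕ → Euc N := fun k => (1 + (r + 2 + 3 * k) / ‖x‖) • x with hc
    have htpos : ∀ k : ℕ, (0:ℝ) ≤ (r + 2 + 3 * k) / ‖x‖ := by
      intro k
      apply div_nonneg _ hxpos.le
      positivity
    have ht1 : ∀ k : ℕ, (1:ℝ) ≤ 1 + (r + 2 + 3 * k) / ‖x‖ := fun k => by
      have := htpos k; linarith
    have hnc : ∀ k : ℕ, ‖c k‖ = ‖x‖ + (r + 2 + 3 * k) := by
      intro k
      rw [hc]
      simp only [norm_smul, Real.norm_eq_abs]
      rw [abs_of_nonneg (le_trans zero_le_one (ht1 k)), add_mul, one_mul,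
        div_mul_cancel₀ _ hxpos.ne']
    have hball : ∀ k : ℕ, Metric.ball (c k) 1 ⊆ Ω := by
      intro k
      set T := ((fun t : ℝ => t • x) '' Set.Ici 1) ∪ Metric.ball (c k) 1 with hT
      have hckray : c k ∈ (fun t : ℝ => t • x) '' Set.Ici 1 := ⟨_, ht1 k, rfl⟩
      have hconn : IsPreconnected T :=
        IsPreconnected.union (c k) hckray (Metric.mem_ball_self one_pos)
          (isPreconnected_Ici.image _ (continuous_id.smul continuous_const).continuousOn)
          (convex_ball _ _).isPreconnected
      have hTS : ∀ z ∈ T, r < ‖z‖ := by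
        rintro z (⟨t, ht, rfl⟩ | hz)
        · rw [norm_smul, Real.norm_eq_abs, abs_of_nonneg (le_trans zero_le_one ht)]
          have h1 : (1:ℝ) * ‖x‖ ≤ t * ‖x‖ := mul_le_mul_of_nonneg_right ht hxpos.le
          rw [one_mul] at h1
          exact lt_of_lt_of_le hnx h1
        · have h1 : dist z (c k) < 1 := Metric.mem_ball.mp hz
          have h2 : ‖c k‖ - ‖z‖ ≤ dist z (c k) := by
            rw [dist_eq_norm]
            calc ‖c k‖ - ‖z‖ ≤ ‖c k - z‖ := by
                  have := norm_sub_norm_le (c k) z; linarith [this]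
              _ = ‖z - c k‖ := norm_sub_rev _ _
          have h3 := hnc k
          have hk0 : (0:ℝ) ≤ 3 * k := by positivity
          nlinarith [hxpos, hnx]
      have hsub : T ⊆ Ω := by
        apply aux_preconn_subset hconn hopen
        · intro z hz hzf
          have := hfr hzf
          rw [Metric.mem_closedBall, dist_zero_right] at this
          exact absurd this (not_le.mpr (hTS z hz))
        · exact ⟨x, Or.inl ⟨1, Set.mem_Ici.mpr (le_refl 1), one_smul ℝ x⟩, hx⟩
      exact fun y hy => hsub (Or.inr hy)
    have hdisj : Pairwise (Function.onFun Disjoint fun k => Metric.ball (c k) 1) := by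
      intro j k hjk
      apply Metric.ball_disjoint_ball
      rw [dist_eq_norm, hc]
      have : (1 + (r + 2 + 3 * j) / ‖x‖) • x - (1 + (r + 2 + 3 * k) / ‖x‖) • x
          = (((3 * j - 3 * k)) / ‖x‖) • x := by
        rw [← sub_smul]; congr 1; field_simp; ring
      rw [this, norm_smul, Real.norm_eq_abs, abs_div, abs_of_nonneg (norm_nonneg x),
        div_mul_cancel₀ _ hxpos.ne']
      have : (3:ℝ) ≤ |3 * (j:ℝ) - 3 * k| := by
        have hjk' : (j:ℝ) ≠ k := by exact_mod_cast fun h => hjk (Nat.cast_injective h)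
        rcases lt_or_gt_of_ne hjk' with h | h
        · rw [abs_sub_comm, abs_of_nonneg (by linarith)]
          have : (j:ℝ) + 1 ≤ k := by exact_mod_cast Nat.succ_le_of_lt (by exact_mod_cast h)
          linarith
        · rw [abs_of_nonneg (by linarith)]
          have : (k:ℝ) + 1 ≤ j := by exact_mod_cast Nat.succ_le_of_lt (by exact_mod_cast h)
          linarith
      linarith
    have hvol : volume (⋃ k, Metric.ball (c k) 1) ≤ volume Ω :=
      measure_mono (iUnion_subset hball)
    rw [measure_iUnion hdisj (fun k => measurableSet_ball)] at hvol
    have hcv : ∀ k, volume (Metric.ball (c k) 1) = volume (Metric.ball (0 : Euc N) 1) :=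
      fun k => Measure.addHaar_ball_center _ (c k) 1
    simp only [hcv] at hvol
    rw [ENNReal.tsum_const_eq_top_of_ne_zero (Metric.measure_ball_pos _ _ one_pos).ne'] at hvol
    exact absurd (lt_of_le_of_lt hvol hΩf) (lt_irrefl _)
  exact (Metric.isBounded_closedBall).subset key

/-- Hölder-type estimate for `lintegral` of an `rpow`. -/
lemma aux_holder {α : Type*} [MeasurableSpace α] (ν : Measure α) [IsFiniteMeasure ν]
    {F : α → ℝ≥0∞} (hF : AEMeasurable F ν) {p : ℝ} (hp : 1 ≤ p) :
    ∫⁻ a, F a ^ (1 / p) ∂ν ≤ (∫⁻ a, F a ∂ν) ^ (1 / p) * ν Set.univ ^ (1 - 1 / p) := by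
  rcases eq_or_lt_of_le hp with h1 | h1
  · simp [← h1]
  · have hp0 : p ≠ 0 := by positivity
    have hpq : p.HolderConjugate (Real.conjExponent p) := Real.HolderConjugate.conjExponent h1
    have hFp : AEMeasurable (fun a => F a ^ (1 / p)) ν := hF.pow aemeasurable_const
    have h := ENNReal.lintegral_mul_le_Lp_mul_Lq ν hpq hFp aemeasurable_const
      (f := fun a => F a ^ (1 / p)) (g := fun _ => 1)
    simp only [Pi.mul_apply, mul_one, ENNReal.one_rpow, lintegral_one] at h
    have hFF : ∀ a, (F a ^ (1 / p)) ^ p = F a := by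
      intro a
      rw [← ENNReal.rpow_mul, one_div, inv_mul_cancel₀ hp0, ENNReal.rpow_one]
    simp only [hFF] at h
    have hq : 1 - 1 / p = 1 / Real.conjExponent p := by
      rw [one_div, one_div, hpq.one_sub_inv]
    rw [hq]
    exact h

/-- Theorem 3.4: the variable-order fractional Poincaré–Wirtinger inequality. -/
theorem stmt3 (N : ℕ) (s : Euc N → Euc N → ℝ) (sm sp : ℝ) (hs : SCond N s sm sp)
    (Ω : Set (Euc N)) (hΩ : IsC01 Ω) (hΩf : volume Ω < ⊤)
    (p : ℝ) (hp : 1 ≤ p) :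
    ∃ C : ℝ, 0 < C ∧ ∀ u : Euc N → ℝ, MemW N s p Ω u →
      (∫ x in Ω, |u x - (∫ y in Ω, u y) / (volume Ω).toReal|)
        ≤ C * (gagP N s p Ω u).toReal ^ (1 / p) := by
  obtain ⟨hscont, hssymm, hsm, hsp, hsb⟩ := hs
  have hp0 : (0:ℝ) < p := lt_of_lt_of_le one_pos hp
  by_cases hm0 : volume Ω = 0
  · refine ⟨1, one_pos, fun u hu => ?_⟩
    rw [show volume.restrict Ω = 0 from Measure.restrict_eq_zero.mpr hm0,
      integral_zero_measure]
    have : (0:ℝ) ≤ (gagP N s p Ω u).toReal ^ (1 / p) :=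
      Real.rpow_nonneg ENNReal.toReal_nonneg _
    linarith
  have hmeas : MeasurableSet Ω := hΩ.1.measurableSet
  set μ := volume.restrict Ω with hμ
  have hμuniv : μ Set.univ = volume Ω := by rw [hμ, Measure.restrict_apply_univ]
  haveI : IsFiniteMeasure μ := ⟨by rw [hμuniv]; exact hΩf⟩
  set m : ℝ≥0∞ := volume Ω with hm
  set mr : ℝ := m.toReal with hmrdef
  have hmr : 0 < mr := ENNReal.toReal_pos hm0 hΩf.ne
  obtain ⟨D, hD0, hD⟩ : ∃ D : ℝ, 0 ≤ D ∧ ∀ x ∈ Ω, ∀ y ∈ Ω, ‖x - y‖ ≤ D := by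
    obtain ⟨R, hR⟩ := (aux_bounded hΩ.1 hΩ.2.1 hΩf).subset_closedBall 0
    refine ⟨2 * max R 0, by positivity, fun x hx y hy => ?_⟩
    have hx' : ‖x‖ ≤ max R 0 := by
      have := hR hx; rw [Metric.mem_closedBall, dist_zero_right] at this
      exact this.trans (le_max_left _ _)
    have hy' : ‖y‖ ≤ max R 0 := by
      have := hR hy; rw [Metric.mem_closedBall, dist_zero_right] at this
      exact this.trans (le_max_left _ _)
    calc ‖x - y‖ ≤ ‖x‖ + ‖y‖ := norm_sub_le _ _
      _ ≤ 2 * max R 0 := by linarith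
  set M : ℝ := max 1 D with hMdef
  have hM1 : (1:ℝ) ≤ M := le_max_left _ _
  set K : ℝ := M ^ (((N:ℝ) + p) / p) with hKdef
  have hK0 : 0 < K := Real.rpow_pos_of_pos (lt_of_lt_of_le one_pos hM1) _
  set Cen : ℝ≥0∞ := ENNReal.ofReal (1 / mr) * ENNReal.ofReal K * (m * m) ^ (1 - 1/p)
    with hCendef
  have hpexp : (0:ℝ) ≤ 1 - 1/p := by
    have : 1/p ≤ 1 := by rw [div_le_one hp0]; exact hp
    linarith
  have hmm_ne_top : m * m ≠ ⊤ := ENNReal.mul_ne_top hΩf.ne hΩf.ne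
  have hmm_pos : (0:ℝ≥0∞) < m * m := ENNReal.mul_pos hm0 hm0
  have hCen_ne_top : Cen ≠ ⊤ := by
    apply ENNReal.mul_ne_top (ENNReal.mul_ne_top ENNReal.ofReal_ne_top ENNReal.ofReal_ne_top)
    exact (ENNReal.rpow_lt_top_of_nonneg hpexp hmm_ne_top).ne
  have hCen_pos : 0 < Cen := by
    refine ENNReal.mul_pos (ENNReal.mul_pos ?_ ?_).ne' ?_
    · exact (ENNReal.ofReal_pos.mpr (by positivity : (0:ℝ) < 1/mr)).ne'
    · exact (ENNReal.ofReal_pos.mpr hK0).ne'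
    · exact (ENNReal.rpow_pos hmm_pos hmm_ne_top).ne'
  refine ⟨Cen.toReal, ENNReal.toReal_pos hCen_pos.ne' hCen_ne_top, fun u hu => ?_⟩
  obtain ⟨huLp, hgag⟩ := hu
  have hone_le : (1:ℝ≥0∞) ≤ ENNReal.ofReal p := by
    rw [← ENNReal.ofReal_one]; exact ENNReal.ofReal_le_ofReal hp
  have huInt : Integrable u μ :=
    memLp_one_iff_integrable.mp (huLp.mono_exponent hone_le)
  have husm : AEStronglyMeasurable u μ := huLp.aestronglyMeasurable
  set a : ℝ := (∫ y in Ω, u y) / (volume Ω).toReal with ha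
  -- Step 1
  have step1 : ∀ x : Euc N, ENNReal.ofReal |u x - a| ≤
      ENNReal.ofReal (1 / mr) * ∫⁻ y, ENNReal.ofReal |u x - u y| ∂μ := by
    intro x
    have hix : Integrable (fun y => u x - u y) μ := (integrable_const _).sub huInt
    have e1 : u x - a = (1 / mr) * ∫ y, (u x - u y) ∂μ := by
      rw [integral_sub (integrable_const _) huInt, integral_const, measureReal_def, hμuniv]
      rw [smul_eq_mul, ha]
      field_simp
      rw [← hm, ← hmrdef, sub_mul, div_mul_cancel₀ _ hmr.ne']
    have hia : |u x - a| ≤ (1 / mr) * ∫ y, |u x - u y| ∂μ := by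
      rw [e1, abs_mul, abs_of_nonneg (by positivity : (0:ℝ) ≤ 1/mr)]
      refine mul_le_mul_of_nonneg_left ?_ (by positivity)
      have hni := norm_integral_le_integral_norm (fun y => u x - u y) (μ := μ)
      simpa [Real.norm_eq_abs] using hni
    calc ENNReal.ofReal |u x - a|
        ≤ ENNReal.ofReal ((1/mr) * ∫ y, |u x - u y| ∂μ) := ENNReal.ofReal_le_ofReal hia
      _ = ENNReal.ofReal (1/mr) * ENNReal.ofReal (∫ y, |u x - u y| ∂μ) :=
          ENNReal.ofReal_mul (by positivity)
      _ = ENNReal.ofReal (1/mr) * ∫⁻ y, ENNReal.ofReal |u x - u y| ∂μ := by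
          rw [ofReal_integral_eq_lintegral_ofReal hix.abs
            (Eventually.of_forall fun y => abs_nonneg _)]
  -- The product integrand
  set F : Euc N × Euc N → ℝ≥0∞ := fun z =>
    ENNReal.ofReal (|u z.1 - u z.2| ^ p / ‖z.1 - z.2‖ ^ ((N:ℝ) + s z.1 z.2 * p)) with hFdef
  have hFmeas : AEMeasurable F (μ.prod μ) := by
    have h1 : AEMeasurable (fun z : Euc N × Euc N => u z.1) (μ.prod μ) :=
      (husm.comp_fst (ν := μ)).aemeasurable
    have h2 : AEMeasurable (fun z : Euc N × Euc N => u z.2) (μ.prod μ) :=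
      (husm.comp_snd (μ := μ)).aemeasurable
    have h3 : AEMeasurable (fun z : Euc N × Euc N => |u z.1 - u z.2| ^ p) (μ.prod μ) :=
      (continuous_abs.measurable.comp_aemeasurable (h1.sub h2)).pow aemeasurable_const
    have h4 : Measurable (fun z : Euc N × Euc N => ‖z.1 - z.2‖ ^ ((N:ℝ) + s z.1 z.2 * p)) := by
      apply Measurable.pow
      · exact (continuous_fst.sub continuous_snd).norm.measurable
      · exact (continuous_const.add ((hscont.comp continuous_id).mul continuous_const)).measurable
    exact ((h3.div h4.aemeasurable)).ennreal_ofReal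
  -- Step 3: pointwise bound
  have step3 : ∀ x ∈ Ω, ∀ y ∈ Ω,
      ENNReal.ofReal |u x - u y| ≤ ENNReal.ofReal K * F (x, y) ^ (1/p) := by
    intro x hx y hy
    by_cases hxy : x = y
    · simp [hxy]
    · have hd0 : (0:ℝ) ≤ |u x - u y| := abs_nonneg _
      have hrn : (0:ℝ) < ‖x - y‖ := by
        rw [norm_pos_iff]; exact sub_ne_zero.mpr hxy
      have hsxy := hsb x y
      have he0 : (0:ℝ) < (N:ℝ) + s x y * p := by
        have : (0:ℝ) ≤ (N:ℝ) := Nat.cast_nonneg N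
        nlinarith [hsm, hsxy.1, hp0]
      set e : ℝ := (N:ℝ) + s x y * p with hedef
      set g : ℝ := |u x - u y| ^ p / ‖x - y‖ ^ e with hgdef
      have hre : (0:ℝ) < ‖x - y‖ ^ e := Real.rpow_pos_of_pos hrn e
      have hg0 : (0:ℝ) ≤ g := by positivity
      have key : |u x - u y| = g ^ (1/p) * (‖x - y‖ ^ e) ^ (1/p) := by
        rw [← Real.mul_rpow hg0 hre.le, hgdef, div_mul_cancel₀ _ hre.ne', one_div,
          Real.rpow_rpow_inv hd0 hp0.ne']
      have hbound : (‖x - y‖ ^ e) ^ (1/p) ≤ K := by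
        rw [← Real.rpow_mul hrn.le]
        have h1 : ‖x - y‖ ≤ M := le_trans (hD x hx y hy) (le_max_right 1 D)
        calc ‖x - y‖ ^ (e * (1/p)) ≤ M ^ (e * (1/p)) :=
            Real.rpow_le_rpow hrn.le h1 (by positivity)
          _ ≤ M ^ (((N:ℝ) + p) / p) := by
            apply Real.rpow_le_rpow_of_exponent_le hM1
            rw [hedef, mul_one_div]
            have h2 : s x y * p ≤ p := by nlinarith [hsxy.2, hsp, hp0]
            gcongr
          _ = K := rfl
      have hfin : |u x - u y| ≤ K * g ^ (1/p) := by
        rw [key, mul_comm]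
        exact mul_le_mul_of_nonneg_right hbound (Real.rpow_nonneg hg0 _)
      calc ENNReal.ofReal |u x - u y| ≤ ENNReal.ofReal (K * g ^ (1/p)) :=
          ENNReal.ofReal_le_ofReal hfin
        _ = ENNReal.ofReal K * ENNReal.ofReal (g ^ (1/p)) := ENNReal.ofReal_mul hK0.le
        _ = ENNReal.ofReal K * (ENNReal.ofReal g) ^ (1/p) := by
            rw [ENNReal.ofReal_rpow_of_nonneg hg0 (by positivity : (0:ℝ) ≤ 1/p)]
        _ = ENNReal.ofReal K * F (x, y) ^ (1/p) := rfl
  -- Chain of inequalities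
  set I : ℝ≥0∞ := ∫⁻ x, ENNReal.ofReal |u x - a| ∂μ with hIdef
  set J : ℝ≥0∞ := ∫⁻ x, ∫⁻ y, ENNReal.ofReal |u x - u y| ∂μ ∂μ with hJdef
  have hIJ : I ≤ ENNReal.ofReal (1/mr) * J := by
    calc I ≤ ∫⁻ x, ENNReal.ofReal (1/mr) * ∫⁻ y, ENNReal.ofReal |u x - u y| ∂μ ∂μ :=
        lintegral_mono fun x => step1 x
      _ = ENNReal.ofReal (1/mr) * J := lintegral_const_mul' _ _ ENNReal.ofReal_ne_top
  set G : ℝ≥0∞ := ∫⁻ x, ∫⁻ y, F (x, y) ^ (1/p) ∂μ ∂μ with hGdef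
  have hJG : J ≤ ENNReal.ofReal K * G := by
    have h1 : J ≤ ∫⁻ x, ∫⁻ y, ENNReal.ofReal K * F (x, y) ^ (1/p) ∂μ ∂μ := by
      apply lintegral_mono_ae
      filter_upwards [ae_restrict_mem hmeas] with x hx
      apply lintegral_mono_ae
      filter_upwards [ae_restrict_mem hmeas] with y hy
      exact step3 x hx y hy
    refine h1.trans (le_of_eq ?_)
    calc ∫⁻ x, ∫⁻ y, ENNReal.ofReal K * F (x, y) ^ (1/p) ∂μ ∂μ
        = ∫⁻ x, ENNReal.ofReal K * ∫⁻ y, F (x, y) ^ (1/p) ∂μ ∂μ :=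
          lintegral_congr fun x => lintegral_const_mul' _ _ ENNReal.ofReal_ne_top
      _ = ENNReal.ofReal K * G := lintegral_const_mul' _ _ ENNReal.ofReal_ne_top
  have hFp_meas : AEMeasurable (fun z => F z ^ (1/p)) (μ.prod μ) :=
    hFmeas.pow aemeasurable_const
  have hGprod : G = ∫⁻ z, F z ^ (1/p) ∂(μ.prod μ) := (lintegral_prod _ hFp_meas).symm
  have hgagprod : gagP N s p Ω u = ∫⁻ z, F z ∂(μ.prod μ) := by
    rw [lintegral_prod _ hFmeas]; rfl
  have hG : G ≤ (gagP N s p Ω u) ^ (1/p) * (m * m) ^ (1 - 1/p) := by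
    rw [hGprod, hgagprod]
    have h := aux_holder (μ.prod μ) hFmeas hp
    rwa [show (μ.prod μ) Set.univ = m * m by
      rw [← Set.univ_prod_univ, Measure.prod_prod, hμuniv]] at h
  have hfinal : I ≤ Cen * (gagP N s p Ω u) ^ (1/p) := by
    calc I ≤ ENNReal.ofReal (1/mr) * J := hIJ
      _ ≤ ENNReal.ofReal (1/mr) * (ENNReal.ofReal K * G) := by
          exact mul_le_mul_right hJG _
      _ ≤ ENNReal.ofReal (1/mr) *
          (ENNReal.ofReal K * ((gagP N s p Ω u) ^ (1/p) * (m * m) ^ (1 - 1/p))) := by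
          exact mul_le_mul_right (mul_le_mul_right hG _) _
      _ = Cen * (gagP N s p Ω u) ^ (1/p) := by
          rw [hCendef]; ring
  have hLHS : (∫ x in Ω, |u x - a|) = I.toReal := by
    have h5 : AEStronglyMeasurable (fun x => |u x - a|) μ :=
      continuous_abs.comp_aestronglyMeasurable (husm.sub aestronglyMeasurable_const)
    rw [hIdef, ← integral_eq_lintegral_of_nonneg_ae
      (Eventually.of_forall fun x => abs_nonneg _) h5]
  have hgagtop : (gagP N s p Ω u) ^ (1/p) ≠ ⊤ :=
    (ENNReal.rpow_lt_top_of_nonneg (by positivity) hgag.ne).ne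
  calc (∫ x in Ω, |u x - a|) = I.toReal := hLHS
    _ ≤ (Cen * (gagP N s p Ω u) ^ (1/p)).toReal :=
        ENNReal.toReal_mono (ENNReal.mul_ne_top hCen_ne_top hgagtop) hfinal
    _ = Cen.toReal * ((gagP N s p Ω u) ^ (1/p)).toReal := ENNReal.toReal_mul
    _ = Cen.toReal * (gagP N s p Ω u).toReal ^ (1/p) := by
        rw [← ENNReal.toReal_rpow]
end
end
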